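/- Coarse density of S in the dual: let C be an L-separated, m-gluable system of chains on a set with walls (S,P). If the metric space ({φ_s : s ∈ S}, dist_C) is k-weakly roughly geodesic, then for every x ∈ X_C there exists s ∈ S with dist_C(φ_s, x) ≤ 3k + 4(L+m+1). -/

import Mathlib

open Set

namespace WallDuality

variable {S : Type*}

/-- A wall on `S`, recorded as the unordered pair of its two complementary halfspaces. -/
def IsWall (h : Set (Set S)) : Prop := ∃ A : Set S, h = {A, Aᶜ}

/-- A set with walls: every element of `P` is a wall on `S`. -/
def IsWallSystem (P : Set (Set (Set S))) : Prop := ∀ h ∈ P, IsWall h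

variable (P : Set (Set (Set S)))

/-- An ultrafilter on `P`: a consistent choice of a halfspace of each wall of `P`. -/
def IsUltra (x : ↥P → Set S) : Prop :=
  (∀ w : ↥P, x w ∈ w.1) ∧
    ∀ (w₁ w₂ : ↥P) (A B : Set S), A ∈ w₁.1 → B ∈ w₂.1 → A ⊆ B → x w₁ = A → x w₂ = B

/-- The set `X̂` of all ultrafilters on `P`. -/
def hatX : Set (↥P → Set S) := {x | IsUltra P x}

/-- The principal ultrafilter of a point `s`: each wall is oriented towards `s`. -/
def principalUF (s : S) : ↥P → Set S := fun w => ⋃₀ {A | A ∈ w.1 ∧ s ∈ A}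

/-- The pseudodistance associated with a collection `C` of subsets of `P`:
the supremum of the cardinalities of members of `C` all of whose walls separate
the two orientations. -/
noncomputable def wallDist (C : Set (Set ↥P)) (x y : ↥P → Set S) : ℕ∞ :=
  ⨆ c ∈ {c | c ∈ C ∧ ∀ w ∈ c, x w ≠ y w}, c.encard

/-- A dualisable system on `(S, P)`. -/
structure IsDualisable (C : Set (Set ↥P)) : Prop where
  singleton_mem : ∀ w : ↥P, ({w} : Set ↥P) ∈ C
  subset_mem : ∀ c ∈ C, ∀ c' ⊆ c, c' ∈ C
  bounded : ∀ s t : S, ∃ M : ℕ, ∀ c ∈ C,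
    (∀ w ∈ c, principalUF P s w ≠ principalUF P t w) → c.encard ≤ (M : ℕ∞)

/-- The dual space `X_C`: ultrafilters at finite distance from all principal ones. -/
def dualSpace (C : Set (Set ↥P)) : Set (↥P → Set S) :=
  {x | IsUltra P x ∧ ∀ s : S, wallDist P C x (principalUF P s) ≠ ⊤}

/-- The majority-vote median of three orientations. -/
def medianUF (x y z : ↥P → Set S) : ↥P → Set S :=
  fun w => x w ∩ y w ∪ x w ∩ z w ∪ y w ∩ z w

/-- A `P`-convex subset of `X̂`: an intersection of halfspaces. -/
def IsPConvex (C' : Set (↥P → Set S)) : Prop :=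
  ∃ (Q : Set ↥P) (σ : ↥P → Set S), (∀ w ∈ Q, σ w ∈ w.1) ∧
    C' = {v | IsUltra P v ∧ ∀ w ∈ Q, v w = σ w}

open scoped Classical in
/-- The gate of `z` to a set `C'` of orientations: reverse the orientation of exactly
those walls that separate `z` from `C'`. -/
noncomputable def gateUF (C' : Set (↥P → Set S)) (z : ↥P → Set S) : ↥P → Set S :=
  fun w => if ∃ v ∈ C', v w = z w then z w else (z w)ᶜ

/-- `A` is gated in `Y` (with respect to the majority-vote median). -/
def IsGatedIn (Y A : Set (↥P → Set S)) : Prop :=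
  ∀ x ∈ Y, ∃! g, g ∈ A ∧ ∀ a ∈ A, medianUF P a g x = g

/-- `σ` is a nested choice of halfspaces witnessing that `c` is a chain. -/
def IsChainOrder (σ : ↥P → Set S) (c : Set ↥P) : Prop :=
  (∀ w ∈ c, σ w ∈ w.1) ∧ ∀ w₁ ∈ c, ∀ w₂ ∈ c, σ w₁ ⊆ σ w₂ ∨ σ w₂ ⊆ σ w₁

/-- A chain of walls. -/
def IsWallChain (c : Set ↥P) : Prop := ∃ σ, IsChainOrder P σ c

/-- A system of chains: a dualisable system all of whose members are chains. -/
def IsChainSystem (C : Set (Set ↥P)) : Prop :=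
  IsDualisable P C ∧ ∀ c ∈ C, IsWallChain P c

/-- `C` is `m`-gluable: two members of `C`, one entirely preceding the other and with
union a chain, can be glued after removing at most `m` consecutive walls taken from
the last `m` walls of the first and the first `m` walls of the second. -/
def IsGluable (C : Set (Set ↥P)) (m : ℕ) : Prop :=
  ∀ c₁ ∈ C, ∀ c₂ ∈ C, ∀ σ : ↥P → Set S,
    IsChainOrder P σ (c₁ ∪ c₂) → Disjoint c₁ c₂ →
    (∀ w₁ ∈ c₁, ∀ w₂ ∈ c₂, σ w₁ ⊆ σ w₂) →
    ∃ b ⊆ c₁ ∪ c₂,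
      b.encard ≤ (m : ℕ∞) ∧
      (∀ w ∈ b ∩ c₁, {w' | w' ∈ c₁ ∧ σ w ⊂ σ w'}.encard < (m : ℕ∞)) ∧
      (∀ w ∈ b ∩ c₂, {w' | w' ∈ c₂ ∧ σ w' ⊂ σ w}.encard < (m : ℕ∞)) ∧
      (∀ w₁ ∈ b, ∀ w₂ ∈ b, ∀ w ∈ c₁ ∪ c₂, σ w₁ ⊆ σ w → σ w ⊆ σ w₂ → w ∈ b) ∧
      (c₁ ∪ c₂) \ b ∈ C

/-- The ball of radius `r` about `x` in `X_C`. -/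
def ballX (C : Set (Set ↥P)) (x : ↥P → Set S) (r : ℕ∞) : Set (↥P → Set S) :=
  {z | z ∈ dualSpace P C ∧ wallDist P C x z ≤ r}

/-- The normal wall path: the gate of `y` to the ball of radius `r` about `x`. -/
noncomputable def nwp (C : Set (Set ↥P)) (x y : ↥P → Set S) (r : ℕ) : ↥P → Set S :=
  gateUF P (ballX P C x (r : ℕ∞)) y

/-- Two walls cross: all four quarterspaces are nonempty. -/
def Crosses (w₁ w₂ : ↥P) : Prop := ∀ A ∈ w₁.1, ∀ B ∈ w₂.1, (A ∩ B).Nonempty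

/-- `C` is `L`-separated. -/
def IsSeparated (C : Set (Set ↥P)) (L : ℕ) : Prop :=
  ∀ w₁ w₂ : ↥P, w₁ ≠ w₂ → ({w₁, w₂} : Set ↥P) ∈ C →
    ∀ c ∈ C, (∀ w ∈ c, Crosses P w w₁ ∧ Crosses P w w₂) → c.encard ≤ (L : ℕ∞)

end WallDuality

namespace WallDuality

section Aux

variable {S : Type*} [Nonempty S] {P : Set (Set (Set S))}

lemma enat_exists {a : ℕ∞} (h : a ≠ ⊤) : ∃ r : ℕ, a = (r : ℕ∞) := by
  lift a to ℕ using h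
  exact ⟨a, rfl⟩

lemma compl_mem_wall (hP : IsWallSystem P) {w : ↥P} {H : Set S} (h : H ∈ w.1) :
    Hᶜ ∈ w.1 := by
  obtain ⟨A, hA⟩ := hP w.1 w.2
  rw [hA] at h ⊢
  simp only [Set.mem_insert_iff, Set.mem_singleton_iff] at h ⊢
  rcases h with h | h
  · right; rw [h]
  · left; rw [h, compl_compl]

lemma mem_wall_resolve (hP : IsWallSystem P) {w : ↥P} {H K : Set S}
    (hH : H ∈ w.1) (hK : K ∈ w.1) : K = H ∨ K = Hᶜ := by
  obtain ⟨A, hA⟩ := hP w.1 w.2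
  rw [hA] at hH hK
  simp only [Set.mem_insert_iff, Set.mem_singleton_iff] at hH hK
  rcases hH with h1 | h1 <;> rcases hK with h2 | h2
  · left; rw [h1, h2]
  · right; rw [h1, h2]
  · right; rw [h1, h2, compl_compl]
  · left; rw [h1, h2]

lemma ultra_nonempty (hP : IsWallSystem P) {x : ↥P → Set S} (hx : IsUltra P x)
    (w : ↥P) : (x w).Nonempty := by
  by_contra h
  rw [Set.not_nonempty_iff_eq_empty] at h
  have h2 : (x w)ᶜ ∈ w.1 := compl_mem_wall hP (hx.1 w)
  have h3 := hx.2 w w (x w) ((x w)ᶜ) (hx.1 w) h2 (by rw [h]; exact Set.empty_subset _) rfl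
  have h4 : (∅ : Set S) = Set.univ := by
    rw [← h, h3, h, Set.compl_empty]
  exact absurd h4.symm (Set.univ_nonempty.ne_empty)

lemma ultra_inter (hP : IsWallSystem P) {x : ↥P → Set S} (hx : IsUltra P x)
    (w₁ w₂ : ↥P) : (x w₁ ∩ x w₂).Nonempty := by
  by_contra h
  rw [Set.not_nonempty_iff_eq_empty] at h
  have hsub : x w₁ ⊆ (x w₂)ᶜ := by
    intro a ha hb
    exact absurd h (Set.nonempty_iff_ne_empty.mp ⟨a, ha, hb⟩)
  have h3 := hx.2 w₁ w₂ (x w₁) ((x w₂)ᶜ) (hx.1 w₁) (compl_mem_wall hP (hx.1 w₂)) hsub rfl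
  obtain ⟨a, ha⟩ := ultra_nonempty hP hx w₂
  have : a ∈ (x w₂)ᶜ := by rw [← h3]; exact ha
  exact this ha

lemma compl_side (hP : IsWallSystem P) {u v : ↥P → Set S} (hu : IsUltra P u)
    (hv : IsUltra P v) (w : ↥P) (hne : u w ≠ v w) : v w = (u w)ᶜ :=
  (mem_wall_resolve hP (hu.1 w) (hv.1 w)).resolve_left fun h => hne h.symm

lemma side_dichotomy (hP : IsWallSystem P) {u v z : ↥P → Set S} (hu : IsUltra P u)
    (hv : IsUltra P v) (hz : IsUltra P z) (w : ↥P) (hne : u w ≠ v w) :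
    z w = u w ∨ z w = v w := by
  rcases mem_wall_resolve hP (hu.1 w) (hz.1 w) with h | h
  · exact Or.inl h
  · right; rw [h, compl_side hP hu hv w hne]

lemma wall_eq_pair_sides (hP : IsWallSystem P) {u v : ↥P → Set S} (hu : IsUltra P u)
    (hv : IsUltra P v) (w : ↥P) (hne : u w ≠ v w) :
    w.1 = {u w, v w} := by
  obtain ⟨A, hA⟩ := hP w.1 w.2
  have hvc : v w = (u w)ᶜ := compl_side hP hu hv w hne
  have hu1 : u w ∈ w.1 := hu.1 w
  rw [hA] at hu1 ⊢
  simp only [Set.mem_insert_iff, Set.mem_singleton_iff] at hu1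
  rcases hu1 with h | h
  · rw [hvc, h]
  · rw [hvc, h, compl_compl, Set.pair_comm]

lemma chain_nest (hP : IsWallSystem P) {u v : ↥P → Set S} (hu : IsUltra P u)
    (hv : IsUltra P v) {c : Set ↥P} (hc : IsWallChain P c) {w w' : ↥P}
    (hw : w ∈ c) (hw' : w' ∈ c) (h1 : u w ≠ v w) (h2 : u w' ≠ v w') :
    u w ⊆ u w' ∨ u w' ⊆ u w := by
  obtain ⟨τ, hτ1, hτ2⟩ := hc
  have H : ∀ a b : ↥P, a ∈ c → b ∈ c → u a ≠ v a → u b ≠ v b → τ a ⊆ τ b →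
      (u a ⊆ u b ∨ u b ⊆ u a) := by
    intro a b ha hb hsa hsb hab
    rcases mem_wall_resolve hP (hτ1 a ha) (hu.1 a) with hua | hua
    · have hub : u b = τ b := hu.2 a b (τ a) (τ b) (hτ1 a ha) (hτ1 b hb) hab hua
      left; rw [hua, hub]; exact hab
    · rcases mem_wall_resolve hP (hτ1 b hb) (hu.1 b) with hub | hub
      · exfalso
        have hvb : v b = (u b)ᶜ := compl_side hP hu hv b hsb
        have hvb' : v b = (τ b)ᶜ := by rw [hvb, hub]
        have hva : v a = (τ a)ᶜ :=
          hv.2 b a ((τ b)ᶜ) ((τ a)ᶜ) (compl_mem_wall hP (hτ1 b hb))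
            (compl_mem_wall hP (hτ1 a ha)) (compl_subset_compl.mpr hab) hvb'
        exact hsa (by rw [hua, hva])
      · right; rw [hua, hub]; exact compl_subset_compl.mpr hab
  rcases hτ2 w hw w' hw' with h | h
  · exact H w w' hw hw' h1 h2 h
  · exact (H w' w hw' hw h2 h1 h).symm

lemma principal_mem_self (hP : IsWallSystem P) (s : S) (w : ↥P) :
    s ∈ principalUF P s w := by
  obtain ⟨A, hA⟩ := hP w.1 w.2
  by_cases hs : s ∈ A
  · exact ⟨A, ⟨by rw [hA]; left; rfl, hs⟩, hs⟩
  · exact ⟨Aᶜ, ⟨by rw [hA]; right; rfl, hs⟩, hs⟩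

lemma principal_eq_of_mem (hP : IsWallSystem P) {s : S} {w : ↥P} {H : Set S}
    (hH : H ∈ w.1) (hs : s ∈ H) : principalUF P s w = H := by
  apply subset_antisymm
  · rintro a ⟨B, ⟨hB1, hB2⟩, ha⟩
    rcases mem_wall_resolve hP hH hB1 with h | h
    · rwa [← h]
    · exact absurd hs (by rw [h] at hB2; exact fun h' => hB2 h')
  · intro a ha; exact ⟨H, ⟨hH, hs⟩, ha⟩

lemma principal_isUltra (hP : IsWallSystem P) (s : S) :
    IsUltra P (principalUF P s) := by
  constructor
  · intro w
    obtain ⟨A, hA⟩ := hP w.1 w.2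
    by_cases hs : s ∈ A
    · rw [principal_eq_of_mem hP (by rw [hA]; left; rfl) hs, hA]; left; rfl
    · rw [principal_eq_of_mem hP (w := w) (H := Aᶜ) (by rw [hA]; right; rfl) hs, hA]
      right; rfl
  · intro w₁ w₂ A B hA hB hAB h1
    have hs : s ∈ A := h1 ▸ principal_mem_self hP s w₁
    exact principal_eq_of_mem hP hB (hAB hs)

lemma crosses_symm {w w' : ↥P} (h : Crosses P w w') : Crosses P w' w := by
  intro A hA B hB
  rw [Set.inter_comm]
  exact h B hB A hA

lemma crosses_pattern (hP : IsWallSystem P) {x y u v : ↥P → Set S}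
    (hx : IsUltra P x) (hy : IsUltra P y) (hu : IsUltra P u) (hv : IsUltra P v)
    {w w' : ↥P} (h1 : x w ≠ y w) (h2 : x w' ≠ y w')
    (hu1 : u w = x w) (hu2 : u w' = y w') (hv1 : v w = y w) (hv2 : v w' = x w') :
    Crosses P w w' := by
  intro A hA B hB
  rw [wall_eq_pair_sides hP hx hy w h1] at hA
  rw [wall_eq_pair_sides hP hx hy w' h2] at hB
  simp only [Set.mem_insert_iff, Set.mem_singleton_iff] at hA hB
  rcases hA with rfl | rfl <;> rcases hB with rfl | rfl
  · exact ultra_inter hP hx w w'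
  · have h := ultra_inter hP hu w w'; rwa [hu1, hu2] at h
  · have h := ultra_inter hP hv w w'; rwa [hv1, hv2] at h
  · exact ultra_inter hP hy w w'

lemma not_crosses_of_chain (hP : IsWallSystem P) {c : Set ↥P} (hc : IsWallChain P c)
    {w w' : ↥P} (hw : w ∈ c) (hw' : w' ∈ c) : ¬ Crosses P w w' := by
  obtain ⟨τ, hτ1, hτ2⟩ := hc
  intro hcr
  rcases hτ2 w hw w' hw' with h | h
  · obtain ⟨a, ha1, ha2⟩ := hcr (τ w) (hτ1 w hw) ((τ w')ᶜ) (compl_mem_wall hP (hτ1 w' hw'))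
    exact ha2 (h ha1)
  · obtain ⟨a, ha1, ha2⟩ := hcr ((τ w)ᶜ) (compl_mem_wall hP (hτ1 w hw)) (τ w') (hτ1 w' hw')
    exact ha1 (h ha2)

section Dist

variable {C : Set (Set ↥P)}

lemma le_wallDist {x y : ↥P → Set S} {c : Set ↥P} (hc : c ∈ C)
    (hs : ∀ w ∈ c, x w ≠ y w) : c.encard ≤ wallDist P C x y :=
  le_biSup _ ⟨hc, hs⟩

lemma wallDist_le {x y : ↥P → Set S} {M : ℕ∞}
    (h : ∀ c ∈ C, (∀ w ∈ c, x w ≠ y w) → c.encard ≤ M) :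
    wallDist P C x y ≤ M :=
  iSup₂_le fun c hc => h c hc.1 hc.2

lemma wallDist_symm (x y : ↥P → Set S) : wallDist P C x y = wallDist P C y x := by
  apply le_antisymm <;>
    exact wallDist_le fun c hc hs => le_wallDist hc fun w hw => (hs w hw).symm

lemma wallDist_triangle (hdual : IsDualisable P C) (x y z : ↥P → Set S) :
    wallDist P C x z ≤ wallDist P C x y + wallDist P C y z := by
  apply wallDist_le
  intro c hc hs
  have hsub : c ⊆ {w ∈ c | x w ≠ y w} ∪ {w ∈ c | x w = y w} := by
    intro w hw
    by_cases h : x w = y w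
    · exact Or.inr ⟨hw, h⟩
    · exact Or.inl ⟨hw, h⟩
  calc c.encard ≤ ({w ∈ c | x w ≠ y w} ∪ {w ∈ c | x w = y w}).encard :=
        Set.encard_mono hsub
    _ ≤ {w ∈ c | x w ≠ y w}.encard + {w ∈ c | x w = y w}.encard :=
        Set.encard_union_le _ _
    _ ≤ wallDist P C x y + wallDist P C y z := by
        apply add_le_add
        · exact le_wallDist (hdual.subset_mem c hc _ (Set.sep_subset _ _))
            (fun w hw => hw.2)
        · exact le_wallDist (hdual.subset_mem c hc _ (Set.sep_subset _ _))
            (fun w hw => by rw [← hw.2]; exact hs w hw.1)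

lemma exists_realizer (hdual : IsDualisable P C) (hCne : C.Nonempty)
    {x y : ↥P → Set S} (hfin : wallDist P C x y ≠ ⊤) :
    ∃ c ∈ C, (∀ w ∈ c, x w ≠ y w) ∧ c.encard = wallDist P C x y ∧ c.Finite := by
  obtain ⟨D, hD⟩ := enat_exists hfin
  rcases Nat.eq_zero_or_pos D with h0 | hpos
  · obtain ⟨c₀, hc₀⟩ := hCne
    refine ⟨∅, hdual.subset_mem c₀ hc₀ ∅ (Set.empty_subset _), by simp, ?_, Set.finite_empty⟩
    rw [hD, h0, Set.encard_empty]; simp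
  · have hex : ∃ c, (c ∈ C ∧ ∀ w ∈ c, x w ≠ y w) ∧ c.encard = (D : ℕ∞) := by
      by_contra hcon
      push_neg at hcon
      have hall : ∀ c ∈ {c | c ∈ C ∧ ∀ w ∈ c, x w ≠ y w}, c.encard ≤ ((D - 1 : ℕ) : ℕ∞) := by
        intro c hc
        have h1 : c.encard ≤ (D : ℕ∞) := by
          rw [← hD]; exact le_wallDist hc.1 hc.2
        have h2 : c.encard ≠ (D : ℕ∞) := hcon c hc
        obtain ⟨e, he⟩ := enat_exists (ne_top_of_le_ne_top (ENat.coe_ne_top D) h1)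
        rw [he] at h1 h2 ⊢
        have hle : e ≤ D := by exact_mod_cast h1
        have hne : e ≠ D := fun h => h2 (by rw [h])
        exact_mod_cast (by omega : e ≤ D - 1)
      have hsup : wallDist P C x y ≤ ((D - 1 : ℕ) : ℕ∞) := iSup₂_le hall
      rw [hD] at hsup
      have : D ≤ D - 1 := by exact_mod_cast hsup
      omega
    obtain ⟨c, ⟨hc1, hc2⟩, hcard⟩ := hex
    exact ⟨c, hc1, hc2, by rw [hcard, hD], Set.finite_of_encard_eq_coe hcard⟩

lemma encard_nat {s : Set ↥P} (hf : s.Finite) : ∃ r : ℕ, s.encard = (r : ℕ∞) :=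
  ⟨hf.toFinset.card, by rw [Set.Finite.encard_eq_coe_toFinset_card]⟩

end Dist

end Aux

end WallDuality

namespace WallDuality

section Glue

variable {S : Type*} [Nonempty S] {P : Set (Set (Set S))}

lemma glue_bound {C : Set (Set ↥P)} {L m : ℕ} (hP : IsWallSystem P)
    (hC : IsChainSystem P C) (hLsep : IsSeparated P C L) (hglu : IsGluable P C m)
    {u v z : ↥P → Set S} (hu : IsUltra P u) (hv : IsUltra P v) (hz : IsUltra P z)
    {c₁ c₂ : Set ↥P} (hc₁ : c₁ ∈ C) (hc₂ : c₂ ∈ C) (hf₁ : c₁.Finite) (hf₂ : c₂.Finite)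
    (hdisj : Disjoint c₁ c₂)
    (hs₁ : ∀ w ∈ c₁, u w ≠ v w) (hs₂ : ∀ w ∈ c₂, u w ≠ v w)
    (hz₁ : ∀ w ∈ c₁, z w = v w) (hz₂ : ∀ w ∈ c₂, z w = u w) :
    c₁.encard + c₂.encard ≤ wallDist P C u v + ((L + m + 1 : ℕ) : ℕ∞) := by
  have hnest₁ : ∀ w ∈ c₁, ∀ w' ∈ c₁, u w ⊆ u w' ∨ u w' ⊆ u w := fun w hw w' hw' =>
    chain_nest hP hu hv (hC.2 c₁ hc₁) hw hw' (hs₁ w hw) (hs₁ w' hw')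
  have hnest₂ : ∀ w ∈ c₂, ∀ w' ∈ c₂, u w ⊆ u w' ∨ u w' ⊆ u w := fun w hw w' hw' =>
    chain_nest hP hu hv (hC.2 c₂ hc₂) hw hw' (hs₂ w hw) (hs₂ w' hw')
  have hcross : ∀ w₁ ∈ c₁, ∀ w₂ ∈ c₂, ¬ u w₁ ⊆ u w₂ → Crosses P w₁ w₂ := by
    intro w₁ h1 w₂ h2 hns A hA B hB
    rw [wall_eq_pair_sides hP hu hv w₁ (hs₁ w₁ h1)] at hA
    rw [wall_eq_pair_sides hP hu hv w₂ (hs₂ w₂ h2)] at hB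
    simp only [Set.mem_insert_iff, Set.mem_singleton_iff] at hA hB
    rcases hA with rfl | rfl <;> rcases hB with rfl | rfl
    · exact ultra_inter hP hu w₁ w₂
    · rw [compl_side hP hu hv w₂ (hs₂ w₂ h2)]
      obtain ⟨a, ha, hna⟩ := Set.not_subset.mp hns
      exact ⟨a, ha, hna⟩
    · have h := ultra_inter hP hz w₁ w₂
      rwa [hz₁ w₁ h1, hz₂ w₂ h2] at h
    · exact ultra_inter hP hv w₁ w₂
  rcases Set.eq_empty_or_nonempty c₁ with rfl | hne₁
  · rw [Set.encard_empty, zero_add]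
    exact le_trans (le_wallDist hc₂ hs₂) (le_self_add)
  obtain ⟨top, htopm, htopmax⟩ :=
    Set.Finite.exists_maximalFor (fun w => u w) c₁ hf₁ hne₁
  have htople : ∀ w ∈ c₁, u w ⊆ u top := by
    intro w hw
    rcases hnest₁ w hw top htopm with h | h
    · exact h
    · exact htopmax hw h
  set Bbad := {w ∈ c₂ | ∃ w', w' ∈ c₁ ∧ w' ≠ top ∧ ¬ u w' ⊆ u w} with hBbadDef
  have hBsub : Bbad ⊆ c₂ := Set.sep_subset _ _
  have hBL : Bbad.encard ≤ (L : ℕ∞) := by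
    rcases Set.eq_empty_or_nonempty Bbad with hBe | hBne
    · rw [hBe, Set.encard_empty]; exact zero_le
    obtain ⟨wb, hwbm, hwbmax⟩ :=
      Set.Finite.exists_maximalFor (fun w => u w) Bbad (hf₂.subset hBsub) hBne
    obtain ⟨hwb2, w₀, hw₀1, hw₀top, hw₀ns⟩ := hwbm
    have htopns : ¬ u top ⊆ u wb := fun h => hw₀ns ((htople w₀ hw₀1).trans h)
    have hble : ∀ w ∈ Bbad, u w ⊆ u wb := by
      intro w hw
      rcases hnest₂ w (hBsub hw) wb hwb2 with h | h
      · exact h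
      · exact hwbmax hw h
    have hcr : ∀ w ∈ Bbad, Crosses P w w₀ ∧ Crosses P w top := by
      intro w hw
      have h1 : ¬ u w₀ ⊆ u w := fun h => hw₀ns (h.trans (hble w hw))
      have h2 : ¬ u top ⊆ u w := fun h => htopns (h.trans (hble w hw))
      exact ⟨crosses_symm (hcross w₀ hw₀1 w (hBsub hw) h1),
        crosses_symm (hcross top htopm w (hBsub hw) h2)⟩
    have hpair : ({w₀, top} : Set ↥P) ∈ C := by
      refine hC.1.subset_mem c₁ hc₁ _ ?_
      intro w hw
      rcases hw with rfl | hw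
      · exact hw₀1
      · rw [Set.mem_singleton_iff] at hw; rw [hw]; exact htopm
    exact hLsep w₀ top hw₀top hpair Bbad (hC.1.subset_mem c₂ hc₂ _ hBsub) hcr
  set c₁' := c₁ \ {top} with hc₁'d
  set c₂' := c₂ \ Bbad with hc₂'d
  have hsub₁ : c₁' ⊆ c₁ := Set.diff_subset
  have hsub₂ : c₂' ⊆ c₂ := Set.diff_subset
  have hc₁'m : c₁' ∈ C := hC.1.subset_mem c₁ hc₁ _ hsub₁
  have hc₂'m : c₂' ∈ C := hC.1.subset_mem c₂ hc₂ _ hsub₂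
  have hfor : ∀ w₁ ∈ c₁', ∀ w₂ ∈ c₂', u w₁ ⊆ u w₂ := by
    intro w₁ h1 w₂ h2
    by_contra h
    exact h2.2 ⟨h2.1, w₁, h1.1, fun he => h1.2 (by rw [he]; rfl), h⟩
  have horder : IsChainOrder P u (c₁' ∪ c₂') := by
    constructor
    · intro w _; exact hu.1 w
    · intro w₁ h1 w₂ h2
      rcases h1 with h1 | h1 <;> rcases h2 with h2 | h2
      · exact hnest₁ _ (hsub₁ h1) _ (hsub₁ h2)
      · exact Or.inl (hfor _ h1 _ h2)
      · exact Or.inr (hfor _ h2 _ h1)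
      · exact hnest₂ _ (hsub₂ h1) _ (hsub₂ h2)
  have hdisj' : Disjoint c₁' c₂' := hdisj.mono hsub₁ hsub₂
  obtain ⟨b, hbsub, hbcard, -, -, -, hglued⟩ :=
    hglu c₁' hc₁'m c₂' hc₂'m u horder hdisj' hfor
  have hgd : ((c₁' ∪ c₂') \ b).encard ≤ wallDist P C u v := by
    apply le_wallDist hglued
    intro w hw
    rcases hw.1 with h | h
    · exact hs₁ w (hsub₁ h)
    · exact hs₂ w (hsub₂ h)
  rcases eq_or_ne (wallDist P C u v) ⊤ with htop | hntop
  · rw [htop, top_add]; exact le_top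
  obtain ⟨dW, hdW⟩ := enat_exists hntop
  have hbfin : b.Finite := ((hf₁.subset hsub₁).union (hf₂.subset hsub₂)).subset hbsub
  obtain ⟨n1, hn1⟩ := encard_nat hf₁
  obtain ⟨n2, hn2⟩ := encard_nat hf₂
  obtain ⟨n1', hn1'⟩ := encard_nat (hf₁.subset hsub₁)
  obtain ⟨n2', hn2'⟩ := encard_nat (hf₂.subset hsub₂)
  obtain ⟨nb, hnb⟩ := encard_nat hbfin
  obtain ⟨nB, hnB⟩ := encard_nat (hf₂.subset hBsub)
  obtain ⟨ng, hng⟩ := encard_nat (((hf₁.subset hsub₁).union (hf₂.subset hsub₂)).diff (t := b))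
  -- arithmetic facts
  have e1 : n1 ≤ n1' + 1 := by
    have h : c₁.encard ≤ c₁'.encard + 1 := by
      calc c₁.encard ≤ (c₁' ∪ {top}).encard := by
            apply Set.encard_mono
            intro w hw
            by_cases he : w = top
            · exact Or.inr (by rw [he]; rfl)
            · exact Or.inl ⟨hw, he⟩
        _ ≤ c₁'.encard + ({top} : Set ↥P).encard := Set.encard_union_le _ _
        _ = c₁'.encard + 1 := by rw [Set.encard_singleton]
    rw [hn1, hn1'] at h
    exact_mod_cast h
  have e2 : n2 ≤ n2' + nB := by
    have h : c₂.encard ≤ c₂'.encard + Bbad.encard := by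
      calc c₂.encard ≤ (c₂' ∪ Bbad).encard := by
            apply Set.encard_mono
            intro w hw
            by_cases he : w ∈ Bbad
            · exact Or.inr he
            · exact Or.inl ⟨hw, he⟩
        _ ≤ _ := Set.encard_union_le _ _
    rw [hn2, hn2', hnB] at h
    exact_mod_cast h
  have e3 : nB ≤ L := by rw [hnB] at hBL; exact_mod_cast hBL
  have e4 : nb ≤ m := by rw [hnb] at hbcard; exact_mod_cast hbcard
  have e5 : ng ≤ dW := by rw [hng, hdW] at hgd; exact_mod_cast hgd
  have e6 : n1' + n2' ≤ ng + nb := by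
    have h : c₁'.encard + c₂'.encard ≤ ((c₁' ∪ c₂') \ b).encard + b.encard := by
      rw [← Set.encard_union_eq hdisj']
      calc (c₁' ∪ c₂').encard ≤ (((c₁' ∪ c₂') \ b) ∪ b).encard := by
            apply Set.encard_mono
            intro w hw
            by_cases hb : w ∈ b
            · exact Or.inr hb
            · exact Or.inl ⟨hw, hb⟩
        _ ≤ _ := Set.encard_union_le _ _
    rw [hn1', hn2', hng, hnb] at h
    exact_mod_cast h
  rw [hn1, hn2, hdW]
  have : n1 + n2 ≤ dW + (L + m + 1) := by omega
  exact_mod_cast this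

end Glue

end WallDuality

namespace WallDuality

/-- **Coarse density of `S` in the dual** (Proposition 5.10): if `C` is an
`L`-separated, `m`-gluable system of chains and the image of `S` in the dual is
`k`-weakly roughly geodesic, then every point of `X_C` is within distance
`3k + 4(L + m + 1)` of the image of `S`. -/
theorem coarse_density
    {S : Type*} [Nonempty S] (P : Set (Set (Set S))) (C : Set (Set ↥P))
    (hP : IsWallSystem P) (L m k : ℕ)
    (hC : IsChainSystem P C) (hsep : IsSeparated P C L) (hglu : IsGluable P C m)
    (hwrg : ∀ s t : S, ∃ n : ℕ,
      wallDist P C (principalUF P s) (principalUF P t) = (n : ℕ∞) ∧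
      ∃ z : ℕ → S, principalUF P (z 0) = principalUF P s ∧
        principalUF P (z n) = principalUF P t ∧
        ∀ r : ℕ, r ≤ n →
          (wallDist P C (principalUF P s) (principalUF P (z r)) ≤ ((r + k : ℕ) : ℕ∞) ∧
            (r : ℕ∞) ≤ wallDist P C (principalUF P s) (principalUF P (z r)) + (k : ℕ∞)) ∧
          (wallDist P C (principalUF P (z r)) (principalUF P t)
              ≤ ((n - r + k : ℕ) : ℕ∞) ∧
            ((n - r : ℕ) : ℕ∞)
              ≤ wallDist P C (principalUF P (z r)) (principalUF P t) + (k : ℕ∞))) :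
    ∀ x ∈ dualSpace P C, ∃ s : S,
      wallDist P C (principalUF P s) x ≤ ((3 * k + 4 * (L + m + 1) : ℕ) : ℕ∞) := by
  classical
  intro x hx
  obtain ⟨hxu, hxfin⟩ := hx
  rcases Set.eq_empty_or_nonempty C with rfl | hCne
  · refine ⟨Classical.arbitrary S, le_trans ?_ (zero_le)⟩
    exact iSup₂_le fun c hc => absurd hc.1 (Set.notMem_empty c)
  have hdual : IsDualisable P C := hC.1
  have hfin : ∀ q : S, wallDist P C (principalUF P q) x ≠ ⊤ := fun q => by
    rw [wallDist_symm]; exact hxfin q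
  have hMne : {r : ℕ | ∃ q : S, wallDist P C (principalUF P q) x = (r : ℕ∞)}.Nonempty := by
    obtain ⟨r, hr⟩ := enat_exists (hfin (Classical.arbitrary S))
    refine ⟨r, ?_⟩
    show ∃ q : S, wallDist P C (principalUF P q) x = (r : ℕ∞)
    exact ⟨Classical.arbitrary S, hr⟩
  set n := sInf {r : ℕ | ∃ q : S, wallDist P C (principalUF P q) x = (r : ℕ∞)} with hndef
  obtain ⟨s, hsx⟩ : ∃ q : S, wallDist P C (principalUF P q) x = (n : ℕ∞) :=
    Nat.sInf_mem hMne
  have hmin : ∀ q : S, (n : ℕ∞) ≤ wallDist P C (principalUF P q) x := by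
    intro q
    obtain ⟨r, hr⟩ := enat_exists (hfin q)
    rw [hr]
    have hmem : r ∈ {r : ℕ | ∃ q : S, wallDist P C (principalUF P q) x = (r : ℕ∞)} :=
      ⟨q, hr⟩
    exact_mod_cast Nat.sInf_le hmem
  refine ⟨s, ?_⟩
  rw [hsx, Nat.cast_le]
  by_contra hbig
  push_neg at hbig
  have hsu := principal_isUltra hP s
  -- a maximal chain between s and x
  obtain ⟨cA, hcAm, hcAsep, hcAcard, hcAfin⟩ := exists_realizer hdual hCne (hfin s)
  rw [hsx] at hcAcard
  have hcAne : cA.Nonempty := by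
    rw [Set.nonempty_iff_ne_empty]
    intro he
    rw [he, Set.encard_empty] at hcAcard
    have h0 : n = 0 := by exact_mod_cast hcAcard.symm
    omega
  obtain ⟨wstar, hwsm, hwsmin⟩ :=
    Set.Finite.exists_minimalFor (fun w => x w) cA hcAfin hcAne
  have hxnest : ∀ w ∈ cA, ∀ w' ∈ cA, x w ⊆ x w' ∨ x w' ⊆ x w := fun w hw w' hw' =>
    chain_nest hP hxu hsu (hC.2 cA hcAm) hw hw' (fun h => hcAsep w hw h.symm)
      (fun h => hcAsep w' hw' h.symm)
  have hwsle : ∀ w ∈ cA, x wstar ⊆ x w := by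
    intro w hw
    rcases hxnest wstar hwsm w hw with h | h
    · exact h
    · exact hwsmin hw h
  -- a point t beyond the chain cA
  obtain ⟨t, ht⟩ := ultra_nonempty hP hxu wstar
  have htu := principal_isUltra hP t
  have hbeyond : ∀ w ∈ cA, principalUF P t w = x w := fun w hw =>
    principal_eq_of_mem hP (hxu.1 w) (hwsle w hw ht)
  have hsepst : ∀ w ∈ cA, principalUF P s w ≠ principalUF P t w := fun w hw => by
    rw [hbeyond w hw]; exact hcAsep w hw
  -- the rough geodesic from s to t
  obtain ⟨N, hNeq, z, hz0, hzN, hzb⟩ := hwrg s t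
  have hnN : n ≤ N := by
    have h := le_wallDist hcAm hsepst
    rw [hcAcard, hNeq] at h
    exact_mod_cast h
  have hyu := principal_isUltra hP (z n)
  obtain ⟨⟨hbd1, -⟩, hbd2, -⟩ := hzb n hnN
  set y := principalUF P (z n) with hydef
  -- distances as naturals
  have hsyfin : wallDist P C (principalUF P s) y ≠ ⊤ :=
    ne_top_of_le_ne_top (ENat.coe_ne_top _) hbd1
  have hytfin : wallDist P C y (principalUF P t) ≠ ⊤ :=
    ne_top_of_le_ne_top (ENat.coe_ne_top _) hbd2
  obtain ⟨Dsy, hDsy⟩ := enat_exists hsyfin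
  obtain ⟨Dty, hDty⟩ := enat_exists hytfin
  have fDsy : Dsy ≤ n + k := by rw [hDsy] at hbd1; exact_mod_cast hbd1
  have fDty : Dty ≤ N - n + k := by rw [hDty] at hbd2; exact_mod_cast hbd2
  have hxtfin : wallDist P C x (principalUF P t) ≠ ⊤ := by
    have h := wallDist_triangle hdual x (principalUF P s) (principalUF P t)
    rw [wallDist_symm x (principalUF P s), hsx, hNeq] at h
    exact ne_top_of_le_ne_top
      (WithTop.add_ne_top.mpr ⟨ENat.coe_ne_top n, ENat.coe_ne_top N⟩) h
  obtain ⟨Dxt, hDxt⟩ := enat_exists hxtfin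
  have fNle : N ≤ n + Dxt := by
    have h := wallDist_triangle hdual (principalUF P s) x (principalUF P t)
    rw [hNeq, hsx, hDxt] at h
    exact_mod_cast h
  have fDxt_ge : n ≤ Dxt := by
    have h := hmin t
    rw [wallDist_symm (principalUF P t) x, hDxt] at h
    exact_mod_cast h
  have hyxfin : wallDist P C y x ≠ ⊤ := by
    have h := wallDist_triangle hdual y (principalUF P s) x
    rw [wallDist_symm y (principalUF P s), hDsy, hsx] at h
    exact ne_top_of_le_ne_top
      (WithTop.add_ne_top.mpr ⟨ENat.coe_ne_top Dsy, ENat.coe_ne_top n⟩) h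
  obtain ⟨Dyx, hDyx⟩ := enat_exists hyxfin
  have fDyx_ge : n ≤ Dyx := by
    have h := hmin (z n)
    rw [← hydef, hDyx] at h
    exact_mod_cast h
  -- realizing chains
  obtain ⟨cSY, hSYm, hSYsep, hSYcard, hSYfin⟩ := exists_realizer hdual hCne hsyfin
  rw [hDsy] at hSYcard
  obtain ⟨cTY, hTYm, hTYsep, hTYcard, hTYfin⟩ := exists_realizer hdual hCne hytfin
  rw [hDty] at hTYcard
  have hstfin : wallDist P C (principalUF P s) (principalUF P t) ≠ ⊤ := by
    rw [hNeq]; exact ENat.coe_ne_top N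
  obtain ⟨cST, hSTm, hSTsep, hSTcard, hSTfin⟩ := exists_realizer hdual hCne hstfin
  rw [hNeq] at hSTcard
  obtain ⟨cXT, hXTm, hXTsep, hXTcard, hXTfin⟩ := exists_realizer hdual hCne hxtfin
  rw [hDxt] at hXTcard
  obtain ⟨cc, hccm, hccsep, hcccard, hccfin⟩ := exists_realizer hdual hCne hyxfin
  rw [hDyx] at hcccard
  -- the pattern subsets
  set SA := {w ∈ cc | principalUF P s w = x w ∧ principalUF P t w = x w} with hSAdef
  set SB := {w ∈ cc | principalUF P s w = x w ∧ principalUF P t w = y w} with hSBdef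
  set SC := {w ∈ cc | principalUF P s w = y w ∧ principalUF P t w = x w} with hSCdef
  set SD := {w ∈ cc | principalUF P s w = y w ∧ principalUF P t w = y w} with hSDdef
  set KY := {w ∈ cA | y w = x w} with hKYdef
  set KS := {w ∈ cA | y w = principalUF P s w} with hKSdef
  set Q1 := {w ∈ cSY | principalUF P t w = y w} with hQ1def
  set Q2 := {w ∈ cSY | principalUF P t w = principalUF P s w} with hQ2def
  set T1 := {w ∈ cTY | principalUF P s w = y w} with hT1def
  set TS := {w ∈ cTY | principalUF P s w = principalUF P t w} with hTSdef
  set U1 := {w ∈ cST | y w = principalUF P t w} with hU1def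
  set U2 := {w ∈ cST | y w = principalUF P s w} with hU2def
  set J := {w ∈ cXT | y w = x w} with hJdef
  set BD := {w ∈ cXT | y w = principalUF P t w ∧ principalUF P s w = x w} with hBDdef
  set DL := {w ∈ cXT | y w = principalUF P t w ∧ principalUF P s w = principalUF P t w}
    with hDLdef
  -- memberships in C and finiteness
  have hSAm : SA ∈ C := hdual.subset_mem cc hccm _ (Set.sep_subset _ _)
  have hSBm : SB ∈ C := hdual.subset_mem cc hccm _ (Set.sep_subset _ _)
  have hSCm : SC ∈ C := hdual.subset_mem cc hccm _ (Set.sep_subset _ _)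
  have hSDm : SD ∈ C := hdual.subset_mem cc hccm _ (Set.sep_subset _ _)
  have hKYm : KY ∈ C := hdual.subset_mem cA hcAm _ (Set.sep_subset _ _)
  have hKSm : KS ∈ C := hdual.subset_mem cA hcAm _ (Set.sep_subset _ _)
  have hQ1m : Q1 ∈ C := hdual.subset_mem cSY hSYm _ (Set.sep_subset _ _)
  have hQ2m : Q2 ∈ C := hdual.subset_mem cSY hSYm _ (Set.sep_subset _ _)
  have hT1m : T1 ∈ C := hdual.subset_mem cTY hTYm _ (Set.sep_subset _ _)
  have hTSm : TS ∈ C := hdual.subset_mem cTY hTYm _ (Set.sep_subset _ _)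
  have hU1m : U1 ∈ C := hdual.subset_mem cST hSTm _ (Set.sep_subset _ _)
  have hU2m : U2 ∈ C := hdual.subset_mem cST hSTm _ (Set.sep_subset _ _)
  have hJm : J ∈ C := hdual.subset_mem cXT hXTm _ (Set.sep_subset _ _)
  have hBDm : BD ∈ C := hdual.subset_mem cXT hXTm _ (Set.sep_subset _ _)
  have hDLm : DL ∈ C := hdual.subset_mem cXT hXTm _ (Set.sep_subset _ _)
  have hSAfin : SA.Finite := hccfin.subset (Set.sep_subset _ _)
  have hSBfin : SB.Finite := hccfin.subset (Set.sep_subset _ _)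
  have hSCfin : SC.Finite := hccfin.subset (Set.sep_subset _ _)
  have hSDfin : SD.Finite := hccfin.subset (Set.sep_subset _ _)
  have hKYfin : KY.Finite := hcAfin.subset (Set.sep_subset _ _)
  have hKSfin : KS.Finite := hcAfin.subset (Set.sep_subset _ _)
  have hQ1fin : Q1.Finite := hSYfin.subset (Set.sep_subset _ _)
  have hQ2fin : Q2.Finite := hSYfin.subset (Set.sep_subset _ _)
  have hT1fin : T1.Finite := hTYfin.subset (Set.sep_subset _ _)
  have hTSfin : TS.Finite := hTYfin.subset (Set.sep_subset _ _)
  have hU1fin : U1.Finite := hSTfin.subset (Set.sep_subset _ _)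
  have hU2fin : U2.Finite := hSTfin.subset (Set.sep_subset _ _)
  have hJfin : J.Finite := hXTfin.subset (Set.sep_subset _ _)
  have hBDfin : BD.Finite := hXTfin.subset (Set.sep_subset _ _)
  have hDLfin : DL.Finite := hXTfin.subset (Set.sep_subset _ _)
  obtain ⟨na, hna⟩ := encard_nat hSAfin
  obtain ⟨nb, hnb⟩ := encard_nat hSBfin
  obtain ⟨nc, hnc⟩ := encard_nat hSCfin
  obtain ⟨nd, hnd⟩ := encard_nat hSDfin
  obtain ⟨nky, hnky⟩ := encard_nat hKYfin
  obtain ⟨nks, hnks⟩ := encard_nat hKSfin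
  obtain ⟨nq1, hnq1⟩ := encard_nat hQ1fin
  obtain ⟨nq2, hnq2⟩ := encard_nat hQ2fin
  obtain ⟨nt1, hnt1⟩ := encard_nat hT1fin
  obtain ⟨nts, hnts⟩ := encard_nat hTSfin
  obtain ⟨nu1, hnu1⟩ := encard_nat hU1fin
  obtain ⟨nu2, hnu2⟩ := encard_nat hU2fin
  obtain ⟨nj, hnj⟩ := encard_nat hJfin
  obtain ⟨nbd, hnbd⟩ := encard_nat hBDfin
  obtain ⟨ndl, hndl⟩ := encard_nat hDLfin
  -- disjoint unions
  have hABdisj : Disjoint SA SB := by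
    rw [Set.disjoint_left]
    intro w hwa hwb
    exact hccsep w hwa.1 (by rw [← hwb.2.2, hwa.2.2])
  have hACdisj : Disjoint SA SC := by
    rw [Set.disjoint_left]
    intro w hwa hwc
    exact hccsep w hwa.1 (by rw [← hwc.2.1, hwa.2.1])
  have hABcard : (SA ∪ SB).encard = (na + nb : ℕ) := by
    rw [Set.encard_union_eq hABdisj, hna, hnb]; exact_mod_cast rfl
  have hACcard : (SA ∪ SC).encard = (na + nc : ℕ) := by
    rw [Set.encard_union_eq hACdisj, hna, hnc]; exact_mod_cast rfl
  -- covers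
  have cov_cc : Dyx ≤ na + nb + (nc + nd) := by
    have h : cc.encard ≤ ((SA ∪ SB) ∪ (SC ∪ SD)).encard := by
      apply Set.encard_mono
      intro w hw
      have hxy : x w ≠ y w := fun h => hccsep w hw h.symm
      rcases side_dichotomy hP hxu hyu hsu w hxy with h1 | h1 <;>
        rcases side_dichotomy hP hxu hyu htu w hxy with h2 | h2
      · exact Or.inl (Or.inl ⟨hw, h1, h2⟩)
      · exact Or.inl (Or.inr ⟨hw, h1, h2⟩)
      · exact Or.inr (Or.inl ⟨hw, h1, h2⟩)
      · exact Or.inr (Or.inr ⟨hw, h1, h2⟩)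
    have h2 := h.trans ((Set.encard_union_le _ _).trans
      (add_le_add (Set.encard_union_le _ _) (Set.encard_union_le _ _)))
    rw [hcccard, hna, hnb, hnc, hnd] at h2
    exact_mod_cast h2
  have cov_cA : n ≤ nky + nks := by
    have h : cA.encard ≤ (KY ∪ KS).encard := by
      apply Set.encard_mono
      intro w hw
      rcases side_dichotomy hP hxu hsu hyu w (fun h => hcAsep w hw h.symm) with h1 | h1
      · exact Or.inl ⟨hw, h1⟩
      · exact Or.inr ⟨hw, h1⟩
    have h2 := h.trans (Set.encard_union_le _ _)
    rw [hcAcard, hnky, hnks] at h2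
    exact_mod_cast h2
  have cov_cSY : Dsy ≤ nq1 + nq2 := by
    have h : cSY.encard ≤ (Q1 ∪ Q2).encard := by
      apply Set.encard_mono
      intro w hw
      rcases side_dichotomy hP hyu hsu htu w (fun h => hSYsep w hw h.symm) with h1 | h1
      · exact Or.inl ⟨hw, h1⟩
      · exact Or.inr ⟨hw, h1⟩
    have h2 := h.trans (Set.encard_union_le _ _)
    rw [hSYcard, hnq1, hnq2] at h2
    exact_mod_cast h2
  have cov_cTY : Dty ≤ nt1 + nts := by
    have h : cTY.encard ≤ (T1 ∪ TS).encard := by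
      apply Set.encard_mono
      intro w hw
      rcases side_dichotomy hP hyu htu hsu w (hTYsep w hw) with h1 | h1
      · exact Or.inl ⟨hw, h1⟩
      · exact Or.inr ⟨hw, h1⟩
    have h2 := h.trans (Set.encard_union_le _ _)
    rw [hTYcard, hnt1, hnts] at h2
    exact_mod_cast h2
  have cov_cST : N ≤ nu1 + nu2 := by
    have h : cST.encard ≤ (U1 ∪ U2).encard := by
      apply Set.encard_mono
      intro w hw
      rcases side_dichotomy hP htu hsu hyu w (fun h => hSTsep w hw h.symm) with h1 | h1
      · exact Or.inl ⟨hw, h1⟩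
      · exact Or.inr ⟨hw, h1⟩
    have h2 := h.trans (Set.encard_union_le _ _)
    rw [hSTcard, hnu1, hnu2] at h2
    exact_mod_cast h2
  have cov_cXT : Dxt ≤ nj + nbd + ndl := by
    have h : cXT.encard ≤ ((J ∪ BD) ∪ DL).encard := by
      apply Set.encard_mono
      intro w hw
      rcases side_dichotomy hP hxu htu hyu w (hXTsep w hw) with h1 | h1
      · exact Or.inl (Or.inl ⟨hw, h1⟩)
      · rcases side_dichotomy hP hxu htu hsu w (hXTsep w hw) with h2 | h2
        · exact Or.inl (Or.inr ⟨hw, h1, h2⟩)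
        · exact Or.inr ⟨hw, h1, h2⟩
    have h2 := h.trans ((Set.encard_union_le _ _).trans
      (add_le_add_left (Set.encard_union_le _ _) _))
    rw [hXTcard, hnj, hnbd, hndl] at h2
    exact_mod_cast h2
  -- union sets in C
  have hABm : SA ∪ SB ∈ C := hdual.subset_mem cc hccm _
    (Set.union_subset (Set.sep_subset _ _) (Set.sep_subset _ _))
  have hACm : SA ∪ SC ∈ C := hdual.subset_mem cc hccm _
    (Set.union_subset (Set.sep_subset _ _) (Set.sep_subset _ _))
  have hABfin : (SA ∪ SB).Finite := hSAfin.union hSBfin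
  have hACfin : (SA ∪ SC).Finite := hSAfin.union hSCfin
  -- glue instance I1 : cA against SD
  have I1 : cA.encard + SD.encard ≤
      wallDist P C (principalUF P s) x + ((L + m + 1 : ℕ) : ℕ∞) := by
    apply glue_bound hP hC hsep hglu hsu hxu htu hcAm hSDm hcAfin hSDfin
    · rw [Set.disjoint_left]
      intro w hwA hwD
      exact hccsep w hwD.1 (by rw [← hwD.2.2, hbeyond w hwA])
    · exact hcAsep
    · intro w hw
      rw [hw.2.1]; exact hccsep w hw.1
    · exact hbeyond
    · intro w hw
      rw [hw.2.2, hw.2.1]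
  have A7 : n + nd ≤ n + (L + m + 1) := by
    rw [hcAcard, hnd, hsx] at I1
    exact_mod_cast I1
  -- glue instance I2 : cA against DL
  have I2 : cA.encard + DL.encard ≤
      wallDist P C (principalUF P s) x + ((L + m + 1 : ℕ) : ℕ∞) := by
    apply glue_bound hP hC hsep hglu hsu hxu htu hcAm hDLm hcAfin hDLfin
    · rw [Set.disjoint_left]
      intro w hwA hwD
      exact hXTsep w hwD.1 (hbeyond w hwA).symm
    · exact hcAsep
    · intro w hw
      rw [hw.2.2]
      exact fun h => hXTsep w hw.1 h.symm
    · exact hbeyond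
    · intro w hw
      exact hw.2.2.symm
  have A8 : n + ndl ≤ n + (L + m + 1) := by
    rw [hcAcard, hndl, hsx] at I2
    exact_mod_cast I2
  -- glue instance I3 : KY against SA ∪ SB
  have I3 : KY.encard + (SA ∪ SB).encard ≤
      wallDist P C (principalUF P s) y + ((L + m + 1 : ℕ) : ℕ∞) := by
    apply glue_bound hP hC hsep hglu hsu hyu hxu hKYm hABm hKYfin hABfin
    · rw [Set.disjoint_left]
      intro w hwK hwU
      rcases hwU with hwU | hwU <;> exact hccsep w hwU.1 hwK.2
    · intro w hw h
      exact hcAsep w hw.1 (h.trans hw.2)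
    · intro w hw h
      rcases hw with hw | hw <;> exact hccsep w hw.1 (h.symm.trans hw.2.1)
    · intro w hw
      exact hw.2.symm
    · intro w hw
      rcases hw with hw | hw <;> exact hw.2.1.symm
  have A9 : nky + (na + nb) ≤ Dsy + (L + m + 1) := by
    rw [hnky, hABcard, hDsy] at I3
    exact_mod_cast I3
  -- glue instance I4 : Q1 against SA
  have I4 : Q1.encard + SA.encard ≤
      wallDist P C (principalUF P s) y + ((L + m + 1 : ℕ) : ℕ∞) := by
    apply glue_bound hP hC hsep hglu hsu hyu htu hQ1m hSAm hQ1fin hSAfin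
    · rw [Set.disjoint_left]
      intro w hw1 hwa
      exact hccsep w hwa.1 (hw1.2.symm.trans hwa.2.2)
    · exact fun w hw => hSYsep w hw.1
    · intro w hw h
      exact hccsep w hw.1 (h.symm.trans hw.2.1)
    · exact fun w hw => hw.2
    · intro w hw
      rw [hw.2.2, hw.2.1]
  have A10 : nq1 + na ≤ Dsy + (L + m + 1) := by
    rw [hnq1, hna, hDsy] at I4
    exact_mod_cast I4
  -- glue instance I5 : T1 against SA
  have I5 : T1.encard + SA.encard ≤
      wallDist P C (principalUF P t) y + ((L + m + 1 : ℕ) : ℕ∞) := by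
    apply glue_bound hP hC hsep hglu htu hyu hsu hT1m hSAm hT1fin hSAfin
    · rw [Set.disjoint_left]
      intro w hw1 hwa
      exact hccsep w hwa.1 (hw1.2.symm.trans hwa.2.1)
    · exact fun w hw h => hTYsep w hw.1 h.symm
    · intro w hw h
      exact hccsep w hw.1 (h.symm.trans hw.2.2)
    · exact fun w hw => hw.2
    · intro w hw
      rw [hw.2.1, hw.2.2]
  have A11 : nt1 + na ≤ Dty + (L + m + 1) := by
    rw [wallDist_symm (principalUF P t) y, hDty, hnt1, hna] at I5
    exact_mod_cast I5
  -- glue instance I6 : U1 against TS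
  have I6 : U1.encard + TS.encard ≤
      wallDist P C (principalUF P s) y + ((L + m + 1 : ℕ) : ℕ∞) := by
    apply glue_bound hP hC hsep hglu hsu hyu htu hU1m hTSm hU1fin hTSfin
    · rw [Set.disjoint_left]
      intro w hwu hwt
      exact hTYsep w hwt.1 hwu.2
    · intro w hw h
      exact hSTsep w hw.1 (h.trans hw.2)
    · intro w hw h
      exact hTYsep w hw.1 (h.symm.trans hw.2)
    · exact fun w hw => hw.2.symm
    · exact fun w hw => hw.2.symm
  have A12 : nu1 + nts ≤ Dsy + (L + m + 1) := by
    rw [hnu1, hnts, hDsy] at I6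
    exact_mod_cast I6
  -- glue instance I7 : U2 against Q2
  have I7 : U2.encard + Q2.encard ≤
      wallDist P C (principalUF P t) y + ((L + m + 1 : ℕ) : ℕ∞) := by
    apply glue_bound hP hC hsep hglu htu hyu hsu hU2m hQ2m hU2fin hQ2fin
    · rw [Set.disjoint_left]
      intro w hwu hwq
      exact hSYsep w hwq.1 hwu.2.symm
    · intro w hw h
      exact hSTsep w hw.1 (hw.2.symm.trans h.symm)
    · intro w hw h
      exact hSYsep w hw.1 (hw.2.symm.trans h)
    · exact fun w hw => hw.2.symm
    · exact fun w hw => hw.2.symm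
  have A13 : nu2 + nq2 ≤ Dty + (L + m + 1) := by
    rw [wallDist_symm (principalUF P t) y, hDty, hnu2, hnq2] at I7
    exact_mod_cast I7
  -- glue instance I8 : SA ∪ SC against J
  have I8 : (SA ∪ SC).encard + J.encard ≤
      wallDist P C y (principalUF P t) + ((L + m + 1 : ℕ) : ℕ∞) := by
    apply glue_bound hP hC hsep hglu hyu htu hxu hACm hJm hACfin hJfin
    · rw [Set.disjoint_left]
      intro w hwU hwJ
      rcases hwU with hwU | hwU <;> exact hccsep w hwU.1 hwJ.2
    · intro w hw h
      rcases hw with hw | hw <;> exact hccsep w hw.1 (h.trans hw.2.2)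
    · intro w hw h
      exact hXTsep w hw.1 (hw.2.symm.trans h)
    · intro w hw
      rcases hw with hw | hw <;> exact hw.2.2.symm
    · exact fun w hw => hw.2.symm
  have A14 : (na + nc) + nj ≤ Dty + (L + m + 1) := by
    rw [hACcard, hnj, hDty] at I8
    exact_mod_cast I8
  -- SB and SC cannot both be nonempty
  have hBCzero : SB = ∅ ∨ SC = ∅ := by
    by_contra hcon
    push_neg at hcon
    obtain ⟨wb, hwb⟩ := hcon.1
    obtain ⟨wg, hwg⟩ := hcon.2
    have hcr : Crosses P wg wb :=
      crosses_pattern hP hxu hyu htu hsu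
        (fun h => hccsep wg hwg.1 h.symm) (fun h => hccsep wb hwb.1 h.symm)
        hwg.2.2 hwb.2.2 hwg.2.1 hwb.2.1
    exact not_crosses_of_chain hP (hC.2 cc hccm) hwg.1 hwb.1 hcr
  -- L-separation bounds
  have hKS_of_B : 2 ≤ nb → nks ≤ L := by
    intro h2
    have hnt : ∃ a b, a ∈ SB ∧ b ∈ SB ∧ a ≠ b := by
      rw [← Set.one_lt_encard_iff, hnb]
      exact_mod_cast h2
    obtain ⟨w1, w2, hw1, hw2, hne12⟩ := hnt
    have hpair : ({w1, w2} : Set ↥P) ∈ C := by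
      refine hdual.subset_mem cc hccm _ ?_
      intro w hw
      rcases hw with rfl | hw
      · exact hw1.1
      · rw [Set.mem_singleton_iff] at hw; rw [hw]; exact hw2.1
    have hcr : ∀ w ∈ KS, Crosses P w w1 ∧ Crosses P w w2 := by
      intro w hw
      have hsep' : x w ≠ y w := fun h => hcAsep w hw.1 (hw.2.symm.trans h.symm)
      exact ⟨crosses_pattern hP hxu hyu htu hsu hsep'
          (fun h => hccsep w1 hw1.1 h.symm) (hbeyond w hw.1) hw1.2.2 hw.2.symm hw1.2.1,
        crosses_pattern hP hxu hyu htu hsu hsep'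
          (fun h => hccsep w2 hw2.1 h.symm) (hbeyond w hw.1) hw2.2.2 hw.2.symm hw2.2.1⟩
    have h := hsep w1 w2 hne12 hpair KS hKSm hcr
    rw [hnks] at h
    exact_mod_cast h
  have hBD_of_C : 2 ≤ nc → nbd ≤ L := by
    intro h2
    have hnt : ∃ a b, a ∈ SC ∧ b ∈ SC ∧ a ≠ b := by
      rw [← Set.one_lt_encard_iff, hnc]
      exact_mod_cast h2
    obtain ⟨w1, w2, hw1, hw2, hne12⟩ := hnt
    have hpair : ({w1, w2} : Set ↥P) ∈ C := by
      refine hdual.subset_mem cc hccm _ ?_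
      intro w hw
      rcases hw with rfl | hw
      · exact hw1.1
      · rw [Set.mem_singleton_iff] at hw; rw [hw]; exact hw2.1
    have hcr : ∀ w ∈ BD, Crosses P w w1 ∧ Crosses P w w2 := by
      intro w hw
      have hsep' : x w ≠ y w := fun h => hXTsep w hw.1 (h.trans hw.2.1)
      exact ⟨crosses_pattern hP hxu hyu hsu htu hsep'
          (fun h => hccsep w1 hw1.1 h.symm) hw.2.2 hw1.2.1 hw.2.1.symm hw1.2.2,
        crosses_pattern hP hxu hyu hsu htu hsep'
          (fun h => hccsep w2 hw2.1 h.symm) hw.2.2 hw2.2.1 hw.2.1.symm hw2.2.2⟩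
    have h := hsep w1 w2 hne12 hpair BD hBDm hcr
    rw [hnbd] at h
    exact_mod_cast h
  -- final case analysis
  rcases hBCzero with h0 | h0
  · have hb0 : nb = 0 := by
      rw [h0, Set.encard_empty] at hnb
      exact_mod_cast hnb.symm
    by_cases h2 : 2 ≤ nc
    · have hL := hBD_of_C h2
      omega
    · omega
  · have hc0 : nc = 0 := by
      rw [h0, Set.encard_empty] at hnc
      exact_mod_cast hnc.symm
    by_cases h2 : 2 ≤ nb
    · have hL := hKS_of_B h2
      omega
    · omega

end WallDuality
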